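/- Let n ≥ 1, let A be a real n×n matrix and B ∈ ℝⁿ, and let R = ∏_{j=1}^n [a_j, b_j] be a rectangle with a_j < b_j for all j. Fix a coordinate i, and set C* = Σ_{j≠i} min(A_{ij}·a_j, A_{ij}·b_j) and c = C* + B_i. Assume A_{ii} ≠ 0 and that there exists ε > 0 with A_{ii}·y + c ≥ ε for all y ∈ [a_i, b_i]. Let x : ℝ → ℝⁿ be differentiable with ẋ(t) = A·x(t) + B for all t, x(0) ∈ R and x(0)_i = a_i. Define T^max = (1/A_{ii})·ln((A_{ii}·b_i + c)/(A_{ii}·a_i + c)). If x(t) ∈ R for all t ∈ [0, T^max], then there exists t ∈ [0, T^max] with x(t)_i = b_i; that is, the trajectory reaches the facet {x : x_i = b_i} of the rectangle within time T^max. -/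

import Mathlib

open Set Real Matrix

/-! If the `i`-th drift is at least `K * x i + c` along the trajectory, then `x i` dominates the
solution of the scalar equation `y' = K y + c` started at `a i`, for which `y + c / K` grows like
`exp (K t)`. By the choice of `Tmax` that solution is at `b i` at time `Tmax`, so `x Tmax i ≥ b i`,
while staying in the rectangle gives `x Tmax i ≤ b i`. -/

lemma min_mul_le_mul_of_mem_Icc {w p q y : ℝ} (hy : y ∈ Icc p q) : min (w * p) (w * q) ≤ w * y := by
  rcases le_total 0 w with hw | hw
  · exact (min_le_left _ _).trans (mul_le_mul_of_nonneg_left hy.1 hw)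
  · exact (min_le_right _ _).trans (mul_le_mul_of_nonpos_left hy.2 hw)

lemma diag_mul_add_sum_min_le_mulVec {ι : Type*} [Fintype ι] [DecidableEq ι]
    (A : Matrix ι ι ℝ) {a b v : ι → ℝ} (hv : ∀ j, v j ∈ Icc (a j) (b j)) (i : ι) :
    A i i * v i + ∑ j ∈ Finset.univ.erase i, min (A i j * a j) (A i j * b j) ≤ (A *ᵥ v) i := by
  rw [Matrix.mulVec, dotProduct, ← Finset.add_sum_erase _ _ (Finset.mem_univ i)]
  gcongr with j
  exact min_mul_le_mul_of_mem_Icc (hv j)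

lemma add_div_mul_exp_le_of_linear_lower_bound {f f' : ℝ → ℝ} {K c t₀ t₁ : ℝ} (hK : K ≠ 0)
    (ht : t₀ ≤ t₁) (hf : ∀ t, HasDerivAt f (f' t) t)
    (hbound : ∀ t ∈ Icc t₀ t₁, K * f t + c ≤ f' t) :
    (f t₀ + c / K) * exp (K * (t₁ - t₀)) ≤ f t₁ + c / K := by
  set g : ℝ → ℝ := fun t ↦ (f t + c / K) * exp (-(K * t))
  have hg : ∀ t, HasDerivAt g ((f' t - (K * f t + c)) * exp (-(K * t))) t := by
    intro t
    have hexp : HasDerivAt (fun s ↦ exp (-(K * s))) (exp (-(K * t)) * -K) t := by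
      simpa using ((hasDerivAt_id t).const_mul K).neg.exp
    refine (((hf t).add_const (c / K)).mul hexp).congr_deriv ?_
    field_simp
    ring
  have hmono : MonotoneOn g (Icc t₀ t₁) :=
    monotoneOn_of_hasDerivWithinAt_nonneg (convex_Icc t₀ t₁)
      (fun t _ ↦ (hg t).continuousAt.continuousWithinAt) (fun t _ ↦ (hg t).hasDerivWithinAt)
      (fun t ht ↦ mul_nonneg (sub_nonneg.2 (hbound t (interior_subset ht))) (exp_pos _).le)
  have hle : g t₀ ≤ g t₁ := hmono (left_mem_Icc.2 ht) (right_mem_Icc.2 ht) ht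
  calc (f t₀ + c / K) * exp (K * (t₁ - t₀)) = g t₀ * exp (K * t₁) := by
        simp only [g, mul_assoc, ← exp_add]
        ring_nf
    _ ≤ g t₁ * exp (K * t₁) := by gcongr
    _ = f t₁ + c / K := by simp only [g, mul_assoc, ← exp_add, neg_add_cancel, exp_zero, mul_one]

/-- The time the solution of `y' = K y + c` takes to go from `p` to `q`. -/
noncomputable def linearHittingTime (K c p q : ℝ) : ℝ :=
  1 / K * log ((K * q + c) / (K * p + c))

section LinearHittingTime

variable {K c p q : ℝ}

lemma linearHittingTime_nonneg (hp : 0 < K * p + c) (hq : 0 < K * q + c) (hpq : p ≤ q) :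
    0 ≤ linearHittingTime K c p q := by
  rw [linearHittingTime, one_div_mul_eq_div]
  rcases le_total 0 K with hK | hK
  · exact div_nonneg (log_nonneg ((one_le_div hp).2 (by nlinarith))) hK
  · exact div_nonneg_of_nonpos (log_nonpos (div_pos hq hp).le ((div_le_one hp).2 (by nlinarith))) hK

lemma add_div_mul_exp_linearHittingTime (hK : K ≠ 0) (hp : 0 < K * p + c)
    (hq : 0 < K * q + c) : (p + c / K) * exp (K * linearHittingTime K c p q) = q + c / K := by
  rw [linearHittingTime, ← mul_assoc, mul_one_div_cancel hK, one_mul, exp_log (div_pos hq hp)]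
  have : p * K + c ≠ 0 := by linarith
  field_simp

end LinearHittingTime

theorem facet_reached_within_Tmax_general
    (n : ℕ)
    (A : Matrix (Fin n) (Fin n) ℝ) (B : Fin n → ℝ)
    (a b : Fin n → ℝ) (hab : ∀ j, a j < b j)
    (i : Fin n)
    (Cstar c : ℝ)
    (hC : Cstar = ∑ j ∈ Finset.univ.erase i, min (A i j * a j) (A i j * b j))
    (hc : c = Cstar + B i)
    (hAii : A i i ≠ 0)
    (hε : ∃ ε > 0, ∀ y ∈ Set.Icc (a i) (b i), A i i * y + c ≥ ε)
    (x : ℝ → Fin n → ℝ)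
    (hx : ∀ t, HasDerivAt x (A.mulVec (x t) + B) t)
    (hxi0 : x 0 i = a i)
    (Tmax : ℝ)
    (hT : Tmax = (1 / A i i) * Real.log ((A i i * b i + c) / (A i i * a i + c)))
    (hstay : ∀ t ∈ Set.Icc (0 : ℝ) Tmax, ∀ j, x t j ∈ Set.Icc (a j) (b j)) :
    ∃ t ∈ Set.Icc (0 : ℝ) Tmax, x t i = b i := by
  replace hT : Tmax = linearHittingTime (A i i) c (a i) (b i) := hT
  obtain ⟨ε, hε0, hεK⟩ := hε
  have hpa : 0 < A i i * a i + c := hε0.trans_le (hεK _ (left_mem_Icc.2 (hab i).le))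
  have hpb : 0 < A i i * b i + c := hε0.trans_le (hεK _ (right_mem_Icc.2 (hab i).le))
  have hT0 : 0 ≤ Tmax := hT ▸ linearHittingTime_nonneg hpa hpb (hab i).le
  have hdrift : ∀ t ∈ Icc 0 Tmax, A i i * x t i + c ≤ (A *ᵥ x t + B) i := fun t ht ↦ by
    rw [hc, hC, Pi.add_apply, ← add_assoc, add_le_add_iff_right]
    exact diag_mul_add_sum_min_le_mulVec A (hstay t ht) i
  have hcomp := add_div_mul_exp_le_of_linear_lower_bound hAii hT0
    (fun t ↦ hasDerivAt_pi.1 (hx t) i) hdrift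
  have hflow : (a i + c / A i i) * exp (A i i * Tmax) = b i + c / A i i :=
    hT ▸ add_div_mul_exp_linearHittingTime hAii hpa hpb
  rw [sub_zero, hxi0, hflow] at hcomp
  have hTmax : Tmax ∈ Icc 0 Tmax := right_mem_Icc.2 hT0
  exact ⟨Tmax, hTmax, le_antisymm (hstay Tmax hTmax i).2 (by linarith)⟩

/-- Theorem 1 of the paper (main claim): for the linear system ẋ = A·x + B on a
rectangle `R = ∏ [a j, b j]`, if the drift in direction `i` is bounded below by a
positive constant on the rectangle, then a trajectory starting on the facet
`{x : x i = a i}` and remaining in `R` reaches the opposite facet `{x : x i = b i}`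
within time `Tmax = (1 / A i i) * log ((A i i * b i + c)/(A i i * a i + c))`. -/
theorem facet_reached_within_Tmax
    (n : ℕ) (hn : 1 ≤ n)
    (A : Matrix (Fin n) (Fin n) ℝ) (B : Fin n → ℝ)
    (a b : Fin n → ℝ) (hab : ∀ j, a j < b j)
    (i : Fin n)
    (Cstar c : ℝ)
    (hC : Cstar = ∑ j ∈ Finset.univ.erase i, min (A i j * a j) (A i j * b j))
    (hc : c = Cstar + B i)
    (hAii : A i i ≠ 0)
    (hε : ∃ ε > 0, ∀ y ∈ Set.Icc (a i) (b i), A i i * y + c ≥ ε)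
    (x : ℝ → Fin n → ℝ)
    (hx : ∀ t, HasDerivAt x (A.mulVec (x t) + B) t)
    (hx0 : ∀ j, x 0 j ∈ Set.Icc (a j) (b j))
    (hxi0 : x 0 i = a i)
    (Tmax : ℝ)
    (hT : Tmax = (1 / A i i) * Real.log ((A i i * b i + c) / (A i i * a i + c)))
    (hstay : ∀ t ∈ Set.Icc (0 : ℝ) Tmax, ∀ j, x t j ∈ Set.Icc (a j) (b j)) :
    ∃ t ∈ Set.Icc (0 : ℝ) Tmax, x t i = b i :=
  facet_reached_within_Tmax_general n A B a b hab i Cstar c hC hc hAii hε x hx hxi0 Tmax hT hstay
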